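/- arXiv:2204.07856 — 4 statements merged into one kernel-verified Lean document; each statement's English description precedes it below -/
import Mathlib

section
/- Let (μᵢ)ᵢ be a nonincreasing sequence of positive reals, (aᵢ)ᵢ ∈ ℓ², and φ an index function such that φ(t)/t² is nonincreasing. If f* = Σᵢ aᵢ φ(μᵢ)^{1/2} eᵢ with (eᵢ) orthonormal in a Hilbert space, and f_λ = Σᵢ aᵢ φ(μᵢ)^{1/2} μᵢ/(μᵢ+λ) eᵢ, then ‖f* − f_λ‖² ≤ φ(λ) · Σᵢ aᵢ². -/
open scoped InnerProductSpace

lemma hasSum_inner_coeff {H : Type*} [NormedAddCommGroup H] [InnerProductSpace ℝ H]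
    (e : ℕ → H) (he : Orthonormal ℝ e) (c : ℕ → ℝ) (f : H)
    (hf : HasSum (fun i => c i • e i) f) (j : ℕ) : ⟪e j, f⟫_ℝ = c j := by
  have h1 : HasSum (fun i => ⟪e j, c i • e i⟫_ℝ) ⟪e j, f⟫_ℝ :=
    (innerSL ℝ (e j)).hasSum hf
  have he' := orthonormal_iff_ite.mp he
  have h2 : (fun i => ⟪e j, c i • e i⟫_ℝ) = fun i => if i = j then c j else 0 := by
    funext i
    rw [real_inner_smul_right, he' j i]
    rcases eq_or_ne i j with rfl | h
    · simp
    · simp [h, Ne.symm h]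
  rw [h2] at h1
  exact (h1.unique (hasSum_ite_eq j (c j)))

lemma norm_sq_hasSum {H : Type*} [NormedAddCommGroup H] [InnerProductSpace ℝ H]
    (e : ℕ → H) (he : Orthonormal ℝ e) (c : ℕ → ℝ) (f : H)
    (hf : HasSum (fun i => c i • e i) f) : HasSum (fun i => (c i) ^ 2) (‖f‖ ^ 2) := by
  have h1 : HasSum (fun i => ⟪f, c i • e i⟫_ℝ) ⟪f, f⟫_ℝ := (innerSL ℝ f).hasSum hf
  have h2 : (fun i => ⟪f, c i • e i⟫_ℝ) = fun i => (c i) ^ 2 := by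
    funext i
    rw [real_inner_smul_right, real_inner_comm, hasSum_inner_coeff e he c f hf i]
    ring
  rw [h2] at h1
  rwa [real_inner_self_eq_norm_sq] at h1

/-- Bias bound for Tikhonov regularization under a general source condition:
if `f* = ∑ aᵢ √(φ μᵢ) eᵢ` and `f_λ = ∑ aᵢ √(φ μᵢ) (μᵢ/(μᵢ+λ)) eᵢ` with `(eᵢ)` orthonormal,
`(μᵢ)` positive nonincreasing, `(aᵢ) ∈ ℓ²`, and `φ` an index function with `φ t / t²`
nonincreasing, then `‖f* − f_λ‖² ≤ φ(λ) ∑ aᵢ²`. -/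
theorem bias_bound {H : Type*} [NormedAddCommGroup H] [InnerProductSpace ℝ H]
    (e : ℕ → H) (he : Orthonormal ℝ e)
    (a μ : ℕ → ℝ) (hμpos : ∀ i, 0 < μ i) (hμanti : ∀ i j, i ≤ j → μ j ≤ μ i)
    (ha : Summable fun i => (a i) ^ 2)
    (φ : ℝ → ℝ) (hφmono : MonotoneOn φ (Set.Ici 0))
    (hφcont : ContinuousOn φ (Set.Ici 0))
    (hφnonneg : ∀ t, 0 ≤ t → 0 ≤ φ t) (hφ0 : φ 0 = 0)
    (hdec : ∀ s t : ℝ, 0 < s → s ≤ t → φ t / t ^ 2 ≤ φ s / s ^ 2)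
    (lam : ℝ) (hlam : 0 < lam)
    (fstar flam : H)
    (hfs : HasSum (fun i => (a i * Real.sqrt (φ (μ i))) • e i) fstar)
    (hfl : HasSum (fun i => (a i * Real.sqrt (φ (μ i)) * (μ i / (μ i + lam))) • e i) flam) :
    ‖fstar - flam‖ ^ 2 ≤ φ lam * ∑' i, (a i) ^ 2 := by
  set c : ℕ → ℝ := fun i => a i * Real.sqrt (φ (μ i)) * (lam / (μ i + lam)) with hc
  have hdiff : HasSum (fun i => c i • e i) (fstar - flam) := by
    have := hfs.sub hfl
    convert this using 2 with i
    rw [← sub_smul]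
    congr 1
    have hne : μ i + lam ≠ 0 := by have := hμpos i; positivity
    have h : μ i / (μ i + lam) + lam / (μ i + lam) = 1 := by
      rw [← add_div, div_self hne]
    have := hμpos i
    linear_combination (a i * Real.sqrt (φ (μ i))) * h
  have hsum := norm_sq_hasSum e he c (fstar - flam) hdiff
  have key : ∀ i, (c i) ^ 2 ≤ φ lam * (a i) ^ 2 := by
    intro i
    have hμ := hμpos i
    have hφμ : 0 ≤ φ (μ i) := hφnonneg _ hμ.le
    have hsq : (c i) ^ 2 = (a i) ^ 2 * (φ (μ i) * (lam / (μ i + lam)) ^ 2) := by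
      rw [hc]; rw [mul_pow, mul_pow, Real.sq_sqrt hφμ]; ring
    rw [hsq]
    have hne : (0:ℝ) < μ i + lam := by positivity
    have hbound : φ (μ i) * (lam / (μ i + lam)) ^ 2 ≤ φ lam := by
      rcases le_total (μ i) lam with hle | hle
      · have h1 : φ (μ i) ≤ φ lam := hφmono hμ.le hlam.le hle
        have h2 : (lam / (μ i + lam)) ^ 2 ≤ 1 := by
          have : lam / (μ i + lam) ≤ 1 := by
            rw [div_le_one hne]; linarith
          nlinarith [div_nonneg hlam.le hne.le]
        nlinarith [hφnonneg lam hlam.le, div_nonneg hlam.le hne.le]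
      · have h1 := hdec lam (μ i) hlam hle
        -- φ(μ) ≤ φ(λ) μ²/λ²
        have h1' : φ (μ i) ≤ φ lam * (μ i) ^ 2 / lam ^ 2 := by
          rw [div_le_div_iff₀ (by positivity) (by positivity)] at h1
          rw [le_div_iff₀ (by positivity)]
          linarith
        have h2 : φ (μ i) * (lam / (μ i + lam)) ^ 2 ≤
            φ lam * (μ i) ^ 2 / lam ^ 2 * (lam / (μ i + lam)) ^ 2 := by
          apply mul_le_mul_of_nonneg_right h1' (by positivity)
        refine h2.trans ?_
        rw [div_pow, div_mul_div_comm, div_le_iff₀ (by positivity)]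
        have hφl := hφnonneg lam hlam.le
        nlinarith [mul_nonneg (mul_nonneg hφl (sq_nonneg lam)) (mul_pos hlam hμ).le,
          mul_nonneg (mul_nonneg hφl (sq_nonneg lam)) (sq_nonneg lam)]
    calc (a i) ^ 2 * (φ (μ i) * (lam / (μ i + lam)) ^ 2)
        ≤ (a i) ^ 2 * φ lam := mul_le_mul_of_nonneg_left hbound (sq_nonneg _)
      _ = φ lam * (a i) ^ 2 := by ring
  rw [← hsum.tsum_eq]
  calc ∑' i, (c i) ^ 2 ≤ ∑' i, φ lam * (a i) ^ 2 :=
        Summable.tsum_le_tsum key hsum.summable (ha.mul_left _)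
    _ = φ lam * ∑' i, (a i) ^ 2 := tsum_mul_left
end

section
/- Let φ, ψ be index functions with φ(t)/ψ(t) nondecreasing and φ(t)/(t²ψ(t)) nonincreasing. Then for every λ > 0 and μ > 0, λ²φ(μ)/((μ+λ)²ψ(μ)) ≤ φ(λ)/ψ(λ). -/
/-- Key spectral estimate behind the uniform bias bound: if `φ, ψ` are positive
nondecreasing index functions with `φ/ψ` nondecreasing and `φ/(t²ψ)` nonincreasing
on `(0, ∞)`, then `λ² φ(μ) / ((μ+λ)² ψ(μ)) ≤ φ(λ)/ψ(λ)` for all `λ, μ > 0`. -/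
theorem uniform_filter_bound (φ ψ : ℝ → ℝ)
    (hφpos : ∀ t, 0 < t → 0 < φ t) (hψpos : ∀ t, 0 < t → 0 < ψ t)
    (hφmono : MonotoneOn φ (Set.Ioi 0)) (hψmono : MonotoneOn ψ (Set.Ioi 0))
    (hφcont : ContinuousOn φ (Set.Ioi 0)) (hψcont : ContinuousOn ψ (Set.Ioi 0))
    (hratio_mono : ∀ s t : ℝ, 0 < s → s ≤ t → φ s / ψ s ≤ φ t / ψ t)
    (hratio_anti : ∀ s t : ℝ, 0 < s → s ≤ t → φ t / (t ^ 2 * ψ t) ≤ φ s / (s ^ 2 * ψ s))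
    (lam μ : ℝ) (hlam : 0 < lam) (hμ : 0 < μ) :
    lam ^ 2 * φ μ / ((μ + lam) ^ 2 * ψ μ) ≤ φ lam / ψ lam := by
  have ha := hφpos μ hμ
  have hb := hψpos μ hμ
  have hc := hφpos lam hlam
  have hd := hψpos lam hlam
  have hs : (0:ℝ) < (μ + lam) ^ 2 * ψ μ := by positivity
  rw [div_le_div_iff₀ hs hd]
  rcases le_total μ lam with h | h
  · have key := hratio_mono μ lam hμ h
    rw [div_le_div_iff₀ hb hd] at key
    nlinarith [sq_nonneg (μ + lam), mul_pos ha hd, mul_pos hb hc, sq_nonneg μ,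
      mul_nonneg (mul_nonneg hμ.le hlam.le) (mul_pos hb hc).le,
      mul_nonneg (mul_nonneg hμ.le hμ.le) (mul_pos hb hc).le]
  · have key := hratio_anti lam μ hlam h
    have hb2 : (0:ℝ) < μ ^ 2 * ψ μ := by positivity
    have hd2 : (0:ℝ) < lam ^ 2 * ψ lam := by positivity
    rw [div_le_div_iff₀ hb2 hd2] at key
    nlinarith [mul_nonneg (mul_nonneg hμ.le hlam.le) (mul_pos hb hc).le,
      mul_nonneg (mul_nonneg hlam.le hlam.le) (mul_pos hb hc).le]
end

section
/- Let ψ: (0,∞) → (0,∞) be nondecreasing with t ↦ t/ψ(t) nondecreasing and concave. Let H_K be a Hilbert space embedded in L²(ν) and in a scale H^ψ such that for all f ∈ H_K, ‖f‖²_ψ/‖f‖²_K ≤ (t/ψ)(‖f‖²_{L²}/‖f‖²_K), and suppose that ‖g‖²_∞ ≤ M² ‖g‖²_ψ for all g ∈ H^ψ. Then for any positive self-adjoint C with ⟨Cf,f⟩_K = ‖f‖²_{L²(ν)} and any λ > 0, sup_{‖f‖_K=1} ‖(C+λ)^{-1/2} f‖²_∞ ≤ M²/ψ(λ). -/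
open scoped RealInnerProductSpace

/-- Sup-norm bound on the inverse square-root resolvent: if the Hilbert scale
interpolation inequality `‖f‖ψ²/‖f‖K² ≤ (t/ψ)(‖f‖₂²/‖f‖K²)` holds on the RKHS `H`,
the `L^∞` embedding `‖g‖∞² ≤ M²‖g‖ψ²` holds, `C` is the positive self-adjoint covariance
with `⟪C f, f⟫ = ‖f‖₂²`, and `R = (C+λ)^{-1/2}`, then
`sup_{‖f‖=1} ‖R f‖∞² ≤ M²/ψ(λ)`. -/
theorem inv_sqrt_resolvent_sup_bound {H : Type*} [NormedAddCommGroup H]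
    [InnerProductSpace ℝ H] [CompleteSpace H]
    (ψ : ℝ → ℝ) (hψpos : ∀ t, 0 < t → 0 < ψ t)
    (hψmono : MonotoneOn ψ (Set.Ioi 0))
    (hmono : MonotoneOn (fun t => t / ψ t) (Set.Ioi 0))
    (hconc : ConcaveOn ℝ (Set.Ioi 0) (fun t => t / ψ t))
    (N2 Nψ Ninf : H → ℝ)
    (hN2nn : ∀ f, 0 ≤ N2 f) (hNψnn : ∀ f, 0 ≤ Nψ f) (hNinfnn : ∀ f, 0 ≤ Ninf f)
    (hinterp : ∀ f : H, f ≠ 0 →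
      (Nψ f) ^ 2 / ‖f‖ ^ 2 ≤ (fun t => t / ψ t) ((N2 f) ^ 2 / ‖f‖ ^ 2))
    (M : ℝ) (hM : 0 < M)
    (hemb : ∀ g : H, (Ninf g) ^ 2 ≤ M ^ 2 * (Nψ g) ^ 2)
    (C R : H →L[ℝ] H) (hC : IsSelfAdjoint C)
    (hCval : ∀ f : H, ⟪C f, f⟫ = (N2 f) ^ 2)
    (lam : ℝ) (hlam : 0 < lam)
    (hR : IsSelfAdjoint R) (hRpos : ∀ x, 0 ≤ ⟪R x, x⟫)
    (hR2 : (R * R) * (C + lam • 1) = 1) (hR2' : (C + lam • 1) * (R * R) = 1) :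
    ∀ f : H, ‖f‖ = 1 → (Ninf (R f)) ^ 2 ≤ M ^ 2 / ψ lam := by
  intro f hf
  have hψlam : 0 < ψ lam := hψpos lam hlam
  set A : H →L[ℝ] H := C + lam • 1 with hA
  -- key algebraic identity: R * A * R = 1
  have hkey : R * A * R = 1 := by
    calc R * A * R = (R * A * R) * ((R * R) * A) := by rw [hR2, mul_one]
      _ = R * (A * (R * R)) * (R * A) := by noncomm_ring
      _ = (R * R) * A := by rw [hR2']; noncomm_ring
      _ = 1 := hR2
  set g : H := R f with hg
  have hfne : f ≠ 0 := by
    intro h; rw [h, norm_zero] at hf; norm_num at hf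
  have hgne : g ≠ 0 := by
    intro h
    have : f = 0 := by
      have := congrArg (fun T => T f) hR2'
      simp only [ContinuousLinearMap.mul_apply, ContinuousLinearMap.one_apply] at this
      rw [← this, ← hg, h, map_zero, map_zero]
    exact hfne this
  -- energy identity
  have henergy : N2 g ^ 2 + lam * ‖g‖ ^ 2 = 1 := by
    have h1 : ⟪(R * A * R) f, f⟫ = (1 : ℝ) := by
      rw [hkey]
      simp [real_inner_self_eq_norm_sq, hf]
    have h2 : ⟪(R * A * R) f, f⟫ = ⟪A g, g⟫ := by
      simp only [ContinuousLinearMap.mul_apply]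
      exact hR.isSymmetric (A (R f)) f
    have h3 : ⟪A g, g⟫ = N2 g ^ 2 + lam * ‖g‖ ^ 2 := by
      simp only [hA, ContinuousLinearMap.add_apply, ContinuousLinearMap.smul_apply,
        ContinuousLinearMap.one_apply, inner_add_left, real_inner_smul_left]
      rw [hCval, real_inner_self_eq_norm_sq]
    rw [h2, h3] at h1; exact h1
  set s : ℝ := ‖g‖ ^ 2 with hs
  have hspos : 0 < s := by
    have : ‖g‖ ≠ 0 := norm_ne_zero_iff.mpr hgne
    positivity
  set a : ℝ := N2 g ^ 2 with ha
  have hann : 0 ≤ a := by positivity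
  have hale : a ≤ 1 := by nlinarith
  have hsle : lam * s ≤ 1 := by nlinarith
  have hint := hinterp g hgne
  simp only [← hs, ← ha] at hint
  -- it suffices to bound Nψ g ^ 2
  suffices hNψ : Nψ g ^ 2 ≤ 1 / ψ lam by
    have := hemb g
    calc Ninf (R f) ^ 2 ≤ M ^ 2 * Nψ g ^ 2 := this
      _ ≤ M ^ 2 * (1 / ψ lam) := by nlinarith
      _ = M ^ 2 / ψ lam := by ring
  have hNψs : Nψ g ^ 2 ≤ s * ((a / s) / ψ (a / s)) := by
    have := (div_le_iff₀ hspos).mp hint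
    linarith [this]
  rcases eq_or_lt_of_le hann with hz | hapos
  · -- a = 0
    have : (a / s) / ψ (a / s) = 0 := by rw [← hz]; simp
    rw [this, mul_zero] at hNψs
    have : (0:ℝ) ≤ 1 / ψ lam := by positivity
    linarith
  · have hratpos : 0 < a / s := div_pos hapos hspos
    rcases le_total (a / s) lam with hle | hge
    · -- a/s ≤ lam : use monotonicity of t ↦ t/ψ t
      have hm := hmono (Set.mem_Ioi.mpr hratpos) (Set.mem_Ioi.mpr hlam) hle
      calc Nψ g ^ 2 ≤ s * ((a / s) / ψ (a / s)) := hNψs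
        _ ≤ s * (lam / ψ lam) := by nlinarith
        _ = (lam * s) / ψ lam := by ring
        _ ≤ 1 / ψ lam := by gcongr
    · -- lam ≤ a/s : use monotonicity of ψ
      have hψm := hψmono (Set.mem_Ioi.mpr hlam) (Set.mem_Ioi.mpr hratpos) hge
      have hψrat : 0 < ψ (a / s) := hψpos _ hratpos
      calc Nψ g ^ 2 ≤ s * ((a / s) / ψ (a / s)) := hNψs
        _ = a / ψ (a / s) := by field_simp
        _ ≤ a / ψ lam := by gcongr
        _ ≤ 1 / ψ lam := by gcongr
end

section
/- Let H be a separable Hilbert space with orthonormal system (eᵢ) of functions on a set X, and suppose there is c > 0 such that for every n, sup{‖Σᵢ₌₁ⁿ cᵢeᵢ‖_∞ : Σcᵢ² = 1} ≥ c√(s(n)) for an increasing function s. Let (μᵢ) be a nonincreasing positive sequence and ψ a nondecreasing positive function with M := sup_x Σᵢ ψ(μᵢ)eᵢ(x)² < ∞. Then for every n, ψ(μ_n) ≤ M/(c² s(n)), i.e. μ_n ≤ ψ^{-1}(M/(c² s(n))). -/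
open MeasureTheory Finset

/-! Cauchy–Schwarz with weights `ψ(μᵢ) ≥ ψ(μₙ)` on `1 ≤ i ≤ n` bounds every unit-norm
combination `∑ᵢ₌₁ⁿ cᵢ eᵢ(x)` by `√(M / ψ(μₙ))`, so the Christoffel lower bound
`c √(s n)` is at most `√(M / ψ(μₙ))`; squaring gives the claim. -/

theorem sq_sum_mul_le_of_le_weight {ι : Type*} (S : Finset ι) (a b w : ι → ℝ) {w₀ : ℝ}
    (hw₀ : 0 < w₀) (hw : ∀ i ∈ S, w₀ ≤ w i) :
    (∑ i ∈ S, a i * b i) ^ 2 ≤ (∑ i ∈ S, a i ^ 2) / w₀ * ∑ i ∈ S, w i * b i ^ 2 := by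
  rw [sum_div]
  refine sum_sq_le_sum_mul_sum_of_sq_le_mul S (fun i _ => by positivity)
    (fun i hi => mul_nonneg (hw₀.le.trans (hw i hi)) (sq_nonneg _)) fun i hi => ?_
  have hratio : 1 ≤ w i / w₀ := (one_le_div hw₀).2 (hw i hi)
  calc (a i * b i) ^ 2 = a i ^ 2 * b i ^ 2 * 1 := by ring
    _ ≤ a i ^ 2 * b i ^ 2 * (w i / w₀) := by gcongr
    _ = a i ^ 2 / w₀ * (w i * b i ^ 2) := by ring

theorem sq_sum_mul_le_div_of_tsum_le {ι : Type*} (S : Finset ι) (a b w : ι → ℝ) {w₀ M : ℝ}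
    (hw₀ : 0 < w₀) (hw : ∀ i ∈ S, w₀ ≤ w i) (hw_nonneg : ∀ i, 0 ≤ w i)
    (hsum : Summable fun i => w i * b i ^ 2) (hM : ∑' i, w i * b i ^ 2 ≤ M)
    (ha : ∑ i ∈ S, a i ^ 2 = 1) :
    (∑ i ∈ S, a i * b i) ^ 2 ≤ M / w₀ := by
  have hpartial : ∑ i ∈ S, w i * b i ^ 2 ≤ M :=
    (hsum.sum_le_tsum S fun i _ => mul_nonneg (hw_nonneg i) (sq_nonneg _)).trans hM
  calc (∑ i ∈ S, a i * b i) ^ 2 ≤ (∑ i ∈ S, a i ^ 2) / w₀ * ∑ i ∈ S, w i * b i ^ 2 :=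
        sq_sum_mul_le_of_le_weight S a b w hw₀ hw
    _ ≤ 1 / w₀ * M := by rw [ha]; gcongr
    _ = M / w₀ := one_div_mul_eq_div w₀ M

/-- By Cauchy–Schwarz this is `sup_x (∑ᵢ₌₁ⁿ eᵢ(x)²)^{1/2}`, the square root of the sup-norm of
the inverse Christoffel function of `e₁, …, eₙ`. -/
noncomputable def christoffelSup {X : Type*} (e : ℕ → X → ℝ) (n : ℕ) : ℝ :=
  sSup {r : ℝ | ∃ co : ℕ → ℝ, ∑ i ∈ Icc 1 n, co i ^ 2 = 1 ∧
    r = ⨆ x : X, |∑ i ∈ Icc 1 n, co i * e i x|}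

theorem christoffelSup_le_sqrt {X : Type*} (e : ℕ → X → ℝ) (n : ℕ) {B : ℝ}
    (h : ∀ co : ℕ → ℝ, ∑ i ∈ Icc 1 n, co i ^ 2 = 1 → ∀ x, (∑ i ∈ Icc 1 n, co i * e i x) ^ 2 ≤ B) :
    christoffelSup e n ≤ √B := by
  refine Real.sSup_le ?_ (Real.sqrt_nonneg B)
  rintro _ ⟨co, hco, rfl⟩
  exact Real.iSup_le (fun x => Real.abs_le_sqrt (h co hco x)) (Real.sqrt_nonneg B)

theorem eigenvalue_upper_bound_general {X : Type*}
    (e : ℕ → X → ℝ)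
    (s : ℕ → ℝ) (hspos : ∀ n, 0 < s n)
    (c : ℝ) (hc : 0 < c)
    (hchristoffel : ∀ n : ℕ, 1 ≤ n →
      c * Real.sqrt (s n) ≤
        sSup {r : ℝ | ∃ co : ℕ → ℝ, (∑ i ∈ Finset.Icc 1 n, (co i) ^ 2) = 1 ∧
          r = ⨆ x : X, |∑ i ∈ Finset.Icc 1 n, co i * e i x|})
    (μ : ℕ → ℝ) (hμpos : ∀ i, 0 < μ i) (hμanti : Antitone μ)
    (ψ : ℝ → ℝ) (hψpos : ∀ t, 0 < t → 0 < ψ t) (hψmono : MonotoneOn ψ (Set.Ioi 0))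
    (M : ℝ)
    (hsummable : ∀ x, Summable fun i : ℕ => ψ (μ i) * (e i x) ^ 2)
    (hM : ∀ x, (∑' i : ℕ, ψ (μ i) * (e i x) ^ 2) ≤ M) :
    ∀ n : ℕ, 1 ≤ n → ψ (μ n) ≤ M / (c ^ 2 * s n) := by
  intro n hn
  have hw : ∀ i, 0 < ψ (μ i) := fun i => hψpos _ (hμpos i)
  have hw_ge : ∀ i ∈ Icc 1 n, ψ (μ n) ≤ ψ (μ i) := fun i hi =>
    hψmono (hμpos n) (hμpos i) (hμanti (mem_Icc.1 hi).2)
  have hupper : christoffelSup e n ≤ √(M / ψ (μ n)) :=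
    christoffelSup_le_sqrt e n fun co hco x =>
      sq_sum_mul_le_div_of_tsum_le _ co (e · x) _ (hw n) hw_ge (fun i => (hw i).le)
        (hsummable x) (hM x) hco
  have hsq : (c * √(s n)) ^ 2 ≤ M / ψ (μ n) :=
    (Real.le_sqrt' (mul_pos hc (Real.sqrt_pos.2 (hspos n)))).1 ((hchristoffel n hn).trans hupper)
  rw [mul_pow, Real.sq_sqrt (hspos n).le, le_div_iff₀ (hw n)] at hsq
  rwa [le_div_iff₀ (mul_pos (pow_pos hc 2) (hspos n)), mul_comm]

/-- Eigenvalue upper bound from the Christoffel-function lower bound: if the orthonormal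
system `(eᵢ)` in `L²(ν)` satisfies `sup{‖∑ᵢ₌₁ⁿ cᵢ eᵢ‖_∞ : ∑cᵢ² = 1} ≥ c√(s n)`, the
`(μᵢ)` are nonincreasing positive, `ψ` is nondecreasing positive, and
`M = sup_x ∑ᵢ ψ(μᵢ) eᵢ(x)² < ∞`, then `ψ(μₙ) ≤ M/(c² s(n))` for every `n ≥ 1`. -/
theorem eigenvalue_upper_bound {X : Type*} [MeasurableSpace X] (ν : Measure X)
    (e : ℕ → X → ℝ) (heL2 : ∀ i, MemLp (e i) 2 ν)
    (horth : ∀ i j, (∫ x, e i x * e j x ∂ν) = if i = j then 1 else 0)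
    (s : ℕ → ℝ) (hspos : ∀ n, 0 < s n) (hsmono : StrictMono s)
    (c : ℝ) (hc : 0 < c)
    (hchristoffel : ∀ n : ℕ, 1 ≤ n →
      c * Real.sqrt (s n) ≤
        sSup {r : ℝ | ∃ co : ℕ → ℝ, (∑ i ∈ Finset.Icc 1 n, (co i) ^ 2) = 1 ∧
          r = ⨆ x : X, |∑ i ∈ Finset.Icc 1 n, co i * e i x|})
    (μ : ℕ → ℝ) (hμpos : ∀ i, 0 < μ i) (hμanti : Antitone μ)
    (ψ : ℝ → ℝ) (hψpos : ∀ t, 0 < t → 0 < ψ t) (hψmono : MonotoneOn ψ (Set.Ioi 0))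
    (M : ℝ)
    (hsummable : ∀ x, Summable fun i : ℕ => ψ (μ i) * (e i x) ^ 2)
    (hM : ∀ x, (∑' i : ℕ, ψ (μ i) * (e i x) ^ 2) ≤ M) :
    ∀ n : ℕ, 1 ≤ n → ψ (μ n) ≤ M / (c ^ 2 * s n) :=
  eigenvalue_upper_bound_general e s hspos c hc hchristoffel μ hμpos hμanti ψ hψpos hψmono M
    hsummable hM
end
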